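/- arXiv:2202.12765 — 4 statements merged into one kernel-verified Lean document; each statement's English description precedes it below -/
import Mathlib

section
/- For every real z with |z| < 1 and every real p, cosh(p·arcsin z)/√(1−z²) equals the power series ∑_{k≥0} z^{2k}/(2k)! · ∏_{n=1}^{k} (p² + (2n−1)²). -/
/-!
Write `a k = ∏_{n<k} (p² + (2n+1)²) / (2k)!`, `F x = ∑ a k xᵏ` and `G x = ∑ a k / (2k+1) xᵏ`.
Substituting `z = sin θ`, the claim becomes `cos θ * F (sin² θ) = cosh (p θ)` on `(-π/2, π/2)`.
The recurrence `(2k+1)(2k+2) a (k+1) = (p² + (2k+1)²) a k` gives `G + 2x G' = F` and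
`2(1-x) F' = F + p² G`, so `g θ = cos θ * F (sin² θ)` and `h θ = p sin θ * G (sin² θ)` satisfy
`g' = p h`, `h' = p g`, `g 0 = 1`, `h 0 = 0`; hence `g ± h = exp (± p θ)` and `g = cosh (p θ)`.
Termwise differentiation on `(-1, 1)` is justified because `a (k+1) ≤ a k (1 + p²/(2k+1)²)`,
so the coefficients are bounded.
-/

open Real Finset

section BoundedCoefficients

variable {c : ℕ → ℝ} {M : ℝ}

theorem summable_pow_mul_mul_pow_of_abs_le (hc : ∀ n, |c n| ≤ M) (m : ℕ) {x : ℝ} (hx : |x| < 1) :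
    Summable fun n : ℕ => (n : ℝ) ^ m * c n * x ^ n := by
  refine .of_norm_bounded ((summable_pow_mul_geometric_of_norm_lt_one m
    (by rwa [norm_abs_eq_norm])).mul_left M) fun n => ?_
  simp only [norm_mul, norm_pow, Real.norm_eq_abs, Nat.abs_cast]
  have : 0 ≤ (n : ℝ) ^ m * |x| ^ n := by positivity
  nlinarith [hc n, abs_nonneg (c n), pow_nonneg (abs_nonneg x) n]

theorem hasDerivAt_tsum_mul_pow_of_abs_le (hc : ∀ n, |c n| ≤ M) {x : ℝ} (hx : |x| < 1) :
    HasDerivAt (fun y => ∑' n, c n * y ^ n) (∑' n, c n * (n * x ^ (n - 1))) x := by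
  obtain ⟨r, hxr, hr1⟩ := exists_between hx
  have hr0 : 0 < r := (abs_nonneg x).trans_lt hxr
  have hbound : Summable fun n : ℕ => M / r * ((n : ℝ) ^ 1 * r ^ n) :=
    (summable_pow_mul_geometric_of_norm_lt_one (R := ℝ) 1
      (by rwa [Real.norm_of_nonneg hr0.le])).mul_left _
  have hderiv : ∀ n (y : ℝ), y ∈ Set.Ioo (-r) r →
      HasDerivAt (fun y => c n * y ^ n) (c n * (n * y ^ (n - 1))) y :=
    fun n y _ => (hasDerivAt_pow n y).const_mul (c n)
  have hle : ∀ n (y : ℝ), y ∈ Set.Ioo (-r) r →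
      ‖c n * (n * y ^ (n - 1))‖ ≤ M / r * ((n : ℝ) ^ 1 * r ^ n) := by
    intro n y hy
    rcases n with _ | n
    · simp
    have hM : 0 ≤ M := (abs_nonneg _).trans (hc 0)
    have hpow : |y| ^ n ≤ r ^ n := pow_le_pow_left₀ (abs_nonneg y) (abs_lt.mpr hy).le n
    rw [Real.norm_eq_abs, abs_mul, abs_mul, abs_pow, Nat.abs_cast, Nat.add_sub_cancel, pow_one,
      pow_succ]
    calc |c (n + 1)| * (↑(n + 1) * |y| ^ n) ≤ M * (↑(n + 1) * r ^ n) := by gcongr; exact hc _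
      _ = M / r * (↑(n + 1) * (r ^ n * r)) := by field_simp
  have h0 : Summable fun n => c n * (0 : ℝ) ^ n := by
    apply summable_of_ne_finset_zero (s := {0})
    intro n hn
    simp [zero_pow (by simpa using hn : n ≠ 0)]
  exact hasDerivAt_tsum_of_isPreconnected hbound isOpen_Ioo isPreconnected_Ioo hderiv hle
    (show (0 : ℝ) ∈ Set.Ioo (-r) r by simp [hr0]) h0 (abs_lt.mp hxr)

end BoundedCoefficients

theorem eq_mul_exp_of_hasDerivAt {f : ℝ → ℝ} {a x₀ x : ℝ} {s : Set ℝ} (hs : IsOpen s)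
    (hs' : IsPreconnected s) (hf : ∀ y ∈ s, HasDerivAt f (a * f y) y) (hx₀ : x₀ ∈ s)
    (hx : x ∈ s) : f x = f x₀ * exp (a * (x - x₀)) := by
  have hφ : ∀ y ∈ s, HasDerivAt (fun y => f y * exp (-a * y)) 0 y := by
    intro y hy
    exact ((hf y hy).fun_mul ((hasDerivAt_id' y).const_mul (-a)).exp).congr_deriv (by ring)
  have := hs.is_const_of_deriv_eq_zero hs'
    (fun y hy => (hφ y hy).differentiableAt.differentiableWithinAt)
    (fun y hy => (hφ y hy).deriv) hx hx₀
  calc f x = f x * exp (-a * x) * exp (a * x) := by rw [mul_assoc, ← exp_add]; simp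
    _ = f x₀ * exp (a * (x - x₀)) := by rw [this, mul_assoc, ← exp_add]; congr 2; ring

theorem eq_cosh_of_hasDerivAt {g h : ℝ → ℝ} {p x : ℝ} {s : Set ℝ} (hs : IsOpen s)
    (hs' : IsPreconnected s) (hg : ∀ y ∈ s, HasDerivAt g (p * h y) y)
    (hh : ∀ y ∈ s, HasDerivAt h (p * g y) y) (h0 : 0 ∈ s) (hg0 : g 0 = 1) (hh0 : h 0 = 0)
    (hx : x ∈ s) : g x = cosh (p * x) := by
  have hplus := eq_mul_exp_of_hasDerivAt (f := fun y => g y + h y) (a := p) hs hs'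
    (fun y hy => ((hg y hy).add (hh y hy)).congr_deriv (by ring)) h0 hx
  have hminus := eq_mul_exp_of_hasDerivAt (f := fun y => g y - h y) (a := -p) hs hs'
    (fun y hy => ((hg y hy).sub (hh y hy)).congr_deriv (by ring)) h0 hx
  simp only [hg0, hh0, add_zero, sub_zero, one_mul] at hplus hminus
  rw [cosh_eq, ← neg_mul]
  linarith

theorem mul_natCast_mul_pow_sub_one {R : Type*} [CommSemiring R] (x : R) (n : ℕ) :
    x * (n * x ^ (n - 1)) = n * x ^ n := by
  cases n <;> simp [pow_succ]; ring

noncomputable def coshArcsinCoeff (p : ℝ) (k : ℕ) : ℝ :=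
  (∏ n ∈ range k, (p ^ 2 + (2 * (n : ℝ) + 1) ^ 2)) / (2 * k).factorial

section Coefficients

variable (p : ℝ)

@[simp]
theorem coshArcsinCoeff_zero : coshArcsinCoeff p 0 = 1 := by simp [coshArcsinCoeff]

theorem coshArcsinCoeff_nonneg (k : ℕ) : 0 ≤ coshArcsinCoeff p k := by
  unfold coshArcsinCoeff
  positivity

theorem coshArcsinCoeff_succ_mul (k : ℕ) :
    coshArcsinCoeff p (k + 1) * ((2 * k + 1) * (2 * k + 2)) =
      coshArcsinCoeff p k * (p ^ 2 + (2 * k + 1) ^ 2) := by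
  have hfac :
      ((2 * (k + 1)).factorial : ℝ) = (2 * k).factorial * ((2 * k + 1) * (2 * k + 2)) := by
    rw [show 2 * (k + 1) = 2 * k + 1 + 1 by ring, Nat.factorial_succ, Nat.factorial_succ]
    push_cast
    ring
  simp only [coshArcsinCoeff, prod_range_succ, hfac]
  field_simp

/-- The exponent is chosen to telescope: `3k/(2k+1) + 1/(2k+1)² ≤ 3(k+1)/(2k+3)`. -/
theorem coshArcsinCoeff_le_exp (k : ℕ) :
    coshArcsinCoeff p k ≤ exp (3 * p ^ 2 * k / (2 * k + 1)) := by
  induction k with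
  | zero => simp
  | succ k ih =>
    have hk : (0 : ℝ) < 2 * k + 1 := by positivity
    have hstep :
        coshArcsinCoeff p (k + 1) ≤ coshArcsinCoeff p k * (p ^ 2 / (2 * k + 1) ^ 2 + 1) := by
      have hk2 : (1 : ℝ) ≤ (2 * k + 2) / (2 * k + 1) := by
        rw [one_le_div hk]; linarith
      calc coshArcsinCoeff p (k + 1)
          ≤ coshArcsinCoeff p (k + 1) * ((2 * k + 2) / (2 * k + 1)) :=
            le_mul_of_one_le_right (coshArcsinCoeff_nonneg p _) hk2
        _ = coshArcsinCoeff p k * (p ^ 2 / (2 * k + 1) ^ 2 + 1) := by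
            rw [div_add_one (by positivity), mul_div_assoc' (coshArcsinCoeff p k),
              ← coshArcsinCoeff_succ_mul]
            field_simp
    have hexp : 3 * p ^ 2 * k / (2 * k + 1) + p ^ 2 / (2 * k + 1) ^ 2 ≤
        3 * p ^ 2 * ↑(k + 1) / (2 * ↑(k + 1) + 1) := by
      have hkk : 3 * (k : ℝ) / (2 * k + 1) + 1 / (2 * k + 1) ^ 2 ≤ 3 * (k + 1) / (2 * k + 3) := by
        rw [div_add_div _ _ hk.ne' (by positivity), div_le_div_iff₀ (by positivity) (by positivity)]
        nlinarith [(Nat.cast_nonneg k : (0 : ℝ) ≤ k)]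
      calc 3 * p ^ 2 * k / (2 * k + 1) + p ^ 2 / (2 * k + 1) ^ 2
          = p ^ 2 * (3 * k / (2 * k + 1) + 1 / (2 * k + 1) ^ 2) := by ring
        _ ≤ p ^ 2 * (3 * (k + 1) / (2 * k + 3)) := by gcongr
        _ = 3 * p ^ 2 * ↑(k + 1) / (2 * ↑(k + 1) + 1) := by push_cast; ring
    calc coshArcsinCoeff p (k + 1)
        ≤ coshArcsinCoeff p k * (p ^ 2 / (2 * k + 1) ^ 2 + 1) := hstep
      _ ≤ exp (3 * p ^ 2 * k / (2 * k + 1)) * exp (p ^ 2 / (2 * k + 1) ^ 2) := by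
          gcongr
          exact add_one_le_exp _
      _ ≤ _ := by rw [← exp_add]; exact exp_le_exp.mpr hexp

theorem coshArcsinCoeff_abs_le (k : ℕ) : |coshArcsinCoeff p k| ≤ exp (3 * p ^ 2 / 2) := by
  rw [abs_of_nonneg (coshArcsinCoeff_nonneg p k)]
  refine (coshArcsinCoeff_le_exp p k).trans (exp_le_exp.mpr ?_)
  rw [div_le_div_iff₀ (by positivity) (by positivity)]
  nlinarith [sq_nonneg p]

theorem abs_coshArcsinCoeff_div_le (k : ℕ) :
    |coshArcsinCoeff p k / (2 * k + 1)| ≤ exp (3 * p ^ 2 / 2) := by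
  rw [abs_div, abs_of_pos (by positivity : (0 : ℝ) < 2 * k + 1)]
  exact (div_le_self (abs_nonneg _) (by linarith [(Nat.cast_nonneg k : (0 : ℝ) ≤ k)])).trans
    (coshArcsinCoeff_abs_le p k)

end Coefficients

/-- The series `F`, and below `G`, of the proof idea, in the variable `x = z²`. -/
noncomputable def coshArcsinSeries (p x : ℝ) : ℝ := ∑' k, coshArcsinCoeff p k * x ^ k

noncomputable def sinhArcsinSeries (p x : ℝ) : ℝ :=
  ∑' k, coshArcsinCoeff p k / (2 * k + 1) * x ^ k

section Series

variable (p : ℝ) {x : ℝ}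

@[simp]
theorem coshArcsinSeries_zero : coshArcsinSeries p 0 = 1 := by
  rw [coshArcsinSeries, tsum_eq_single 0 fun k hk => by simp [hk]]
  simp

theorem hasDerivAt_sinhArcsinSeries (hx : |x| < 1) : ∃ d, HasDerivAt (sinhArcsinSeries p) d x ∧
    sinhArcsinSeries p x + 2 * x * d = coshArcsinSeries p x := by
  have hb := abs_coshArcsinCoeff_div_le p
  refine ⟨_, hasDerivAt_tsum_mul_pow_of_abs_le hb hx, ?_⟩
  have h0 : Summable fun n : ℕ => coshArcsinCoeff p n / (2 * n + 1) * x ^ n := by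
    simpa using summable_pow_mul_mul_pow_of_abs_le hb 0 hx
  have h1 : Summable fun n : ℕ =>
      2 * x * (coshArcsinCoeff p n / (2 * n + 1) * (n * x ^ (n - 1))) := by
    refine ((summable_pow_mul_mul_pow_of_abs_le hb 1 hx).mul_left 2).congr fun n => ?_
    linear_combination -2 * coshArcsinCoeff p n / (2 * n + 1) * mul_natCast_mul_pow_sub_one x n
  rw [sinhArcsinSeries, coshArcsinSeries, ← tsum_mul_left, ← h0.tsum_add h1]
  refine tsum_congr fun n => ?_
  field_simp
  linear_combination 2 * coshArcsinCoeff p n * mul_natCast_mul_pow_sub_one x n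

theorem hasDerivAt_coshArcsinSeries (hx : |x| < 1) : ∃ d, HasDerivAt (coshArcsinSeries p) d x ∧
    2 * (1 - x) * d = coshArcsinSeries p x + p ^ 2 * sinhArcsinSeries p x := by
  have ha := coshArcsinCoeff_abs_le p
  refine ⟨_, hasDerivAt_tsum_mul_pow_of_abs_le ha hx, ?_⟩
  set a := coshArcsinCoeff p
  have hshift : Summable fun n : ℕ => (n + 1) * a (n + 1) * x ^ n := by
    refine ((summable_pow_mul_mul_pow_of_abs_le (fun n => ha (n + 1)) 1 hx).add
      (summable_pow_mul_mul_pow_of_abs_le (fun n => ha (n + 1)) 0 hx)).congr fun n => ?_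
    ring
  have hpow := summable_pow_mul_mul_pow_of_abs_le ha 1 hx
  have hcosh : Summable fun n : ℕ => a n * x ^ n := by
    simpa using summable_pow_mul_mul_pow_of_abs_le ha 0 hx
  have hsinh : Summable fun n : ℕ => a n / (2 * n + 1) * x ^ n := by
    simpa using summable_pow_mul_mul_pow_of_abs_le (abs_coshArcsinCoeff_div_le p) 0 hx
  have hD : ∑' n : ℕ, a n * (n * x ^ (n - 1)) = ∑' n : ℕ, (n + 1) * a (n + 1) * x ^ n := by
    rw [tsum_eq_zero_add' (hshift.congr fun n => by push_cast; ring_nf)]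
    simp only [CharP.cast_eq_zero, zero_mul, mul_zero, zero_add]
    exact tsum_congr fun n => by push_cast; ring_nf
  have hxD : x * ∑' n : ℕ, a n * (n * x ^ (n - 1)) = ∑' n : ℕ, (n : ℝ) ^ 1 * a n * x ^ n := by
    rw [← tsum_mul_left]
    exact tsum_congr fun n => by linear_combination a n * mul_natCast_mul_pow_sub_one x n
  calc 2 * (1 - x) * ∑' n : ℕ, a n * (n * x ^ (n - 1))
      = 2 * ∑' n : ℕ, a n * (n * x ^ (n - 1)) - 2 * (x * ∑' n : ℕ, a n * (n * x ^ (n - 1))) := by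
        ring
    _ = ∑' n : ℕ, (2 * ((n + 1) * a (n + 1) * x ^ n) - 2 * ((n : ℝ) ^ 1 * a n * x ^ n)) := by
        rw [hxD, hD, (hshift.mul_left 2).tsum_sub (hpow.mul_left 2), tsum_mul_left, tsum_mul_left]
    _ = ∑' n : ℕ, (a n * x ^ n + p ^ 2 * (a n / (2 * n + 1) * x ^ n)) := by
        refine tsum_congr fun n => ?_
        field_simp
        linear_combination x ^ n * coshArcsinCoeff_succ_mul p n
    _ = coshArcsinSeries p x + p ^ 2 * sinhArcsinSeries p x := by
        rw [hcosh.tsum_add (hsinh.mul_left _), tsum_mul_left]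
        rfl

end Series

theorem cos_mul_coshArcsinSeries_sin_sq (p : ℝ) {θ : ℝ} (hθ : θ ∈ Set.Ioo (-(π / 2)) (π / 2)) :
    cos θ * coshArcsinSeries p (sin θ ^ 2) = cosh (p * θ) := by
  have hsin : ∀ θ, HasDerivAt (fun θ => sin θ ^ 2) (2 * sin θ * cos θ) θ := fun θ =>
    ((hasDerivAt_sin θ).pow 2).congr_deriv (by ring)
  have hsq : ∀ θ ∈ Set.Ioo (-(π / 2)) (π / 2), |sin θ ^ 2| < 1 := fun θ hθ => by
    rw [abs_of_nonneg (sq_nonneg _)]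
    nlinarith [sin_sq_add_cos_sq θ, cos_pos_of_mem_Ioo hθ]
  refine eq_cosh_of_hasDerivAt (g := fun θ => cos θ * coshArcsinSeries p (sin θ ^ 2))
    (h := fun θ => p * sin θ * sinhArcsinSeries p (sin θ ^ 2))
    isOpen_Ioo isPreconnected_Ioo (fun θ hθ => ?_) (fun θ hθ => ?_) (by simp [pi_pos])
    (by simp) (by simp) hθ
  · obtain ⟨d, hd, hid⟩ := hasDerivAt_coshArcsinSeries p (hsq θ hθ)
    refine ((hasDerivAt_cos θ).mul (hd.comp θ (hsin θ))).congr_deriv ?_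
    simp only [Function.comp_apply]
    linear_combination sin θ * hid + 2 * sin θ * d * sin_sq_add_cos_sq θ
  · obtain ⟨d, hd, hid⟩ := hasDerivAt_sinhArcsinSeries p (hsq θ hθ)
    refine (((hasDerivAt_sin θ).const_mul p).mul (hd.comp θ (hsin θ))).congr_deriv ?_
    simp only [Function.comp_apply]
    linear_combination p * cos θ * hid

/-- For `|z| < 1` and `p ∈ ℝ`,
`cosh(p arcsin z)/√(1-z²) = ∑_{k≥0} z^{2k}/(2k)! ∏_{n=1}^k (p² + (2n-1)²)`. -/
theorem cosh_arcsin_series (z p : ℝ) (hz : |z| < 1) :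
    Real.cosh (p * Real.arcsin z) / Real.sqrt (1 - z ^ 2) =
      ∑' k : ℕ, z ^ (2 * k) / (Nat.factorial (2 * k)) *
        ∏ n ∈ Finset.range k, (p ^ 2 + (2 * (n : ℝ) + 1) ^ 2) := by
  obtain ⟨hz₁, hz₂⟩ := abs_lt.mp hz
  have hmem : arcsin z ∈ Set.Ioo (-(π / 2)) (π / 2) :=
    ⟨neg_pi_div_two_lt_arcsin.mpr hz₁, arcsin_lt_pi_div_two.mpr hz₂⟩
  have hsqrt : √(1 - z ^ 2) ≠ 0 := (sqrt_pos.mpr (by nlinarith)).ne'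
  rw [← cos_mul_coshArcsinSeries_sin_sq p hmem, cos_arcsin, sin_arcsin hz₁.le hz₂.le,
    mul_div_cancel_left₀ _ hsqrt, coshArcsinSeries]
  refine tsum_congr fun k => ?_
  rw [coshArcsinCoeff, pow_mul]
  ring
end

section
/- For every even nonnegative integer ℓ and every x ∈ (0,1), the integral ∫_0^1 (u^ℓ/√(1−x²u²)) · (1 − ((ℓ+2)/(ℓ+1)) x²u²) du is strictly positive; moreover it vanishes at x = 1 and is strictly decreasing in x on (0,1). -/
/-!
The integrand is the `u`-derivative of `u ^ (ℓ + 1) * √(1 - x²u²) / (ℓ + 1)`, so for every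
`x² ≤ 1` the integral equals `√(1 - x²) / (ℓ + 1)`; positivity, vanishing at `x = 1` and strict
decrease are read off this closed form. For `x = 1` the fundamental theorem of calculus still
applies because the singular factor `1 / √(1 - u²)` is `arcsin'`, a nonnegative derivative and
hence integrable.
-/

open Real Set intervalIntegral MeasureTheory

theorem hasDerivAt_pow_succ_mul_sqrt_one_sub_mul_sq (l : ℕ) {c u : ℝ} (h : c * u ^ 2 < 1) :
    HasDerivAt (fun u : ℝ => u ^ (l + 1) * √(1 - c * u ^ 2) / ((l : ℝ) + 1))
      (u ^ l / √(1 - c * u ^ 2) * (1 - ((l : ℝ) + 2) / ((l : ℝ) + 1) * c * u ^ 2)) u := by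
  have hpos : 0 < 1 - c * u ^ 2 := by linarith
  have hsqrt : HasDerivAt (fun u : ℝ => √(1 - c * u ^ 2))
      (-(c * (2 * u)) / (2 * √(1 - c * u ^ 2))) u := by
    have hinner : HasDerivAt (fun u : ℝ => 1 - c * u ^ 2) (-(c * (2 * u))) u := by
      simpa using ((hasDerivAt_pow 2 u).const_mul c).const_sub 1
    exact hinner.sqrt hpos.ne'
  have hpow : HasDerivAt (fun u : ℝ => u ^ (l + 1)) (((l : ℝ) + 1) * u ^ l) u := by
    simpa using hasDerivAt_pow (l + 1) u
  refine ((hpow.mul hsqrt).div_const _).congr_deriv ?_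
  have hsq : √(1 - c * u ^ 2) ^ 2 = 1 - c * u ^ 2 := sq_sqrt hpos.le
  have hs : √(1 - c * u ^ 2) ≠ 0 := (sqrt_pos.2 hpos).ne'
  field_simp
  linear_combination (((l : ℝ) + 1) * u ^ l) * hsq

theorem integrableOn_one_div_sqrt_one_sub_mul_sq {c : ℝ} (hc : c ≤ 1) :
    IntegrableOn (fun u : ℝ => 1 / √(1 - c * u ^ 2)) (Ioo 0 1) := by
  have harcsin : IntegrableOn (fun u : ℝ => 1 / √(1 - u ^ 2)) (Ioo 0 1) :=
    (integrableOn_deriv_of_nonneg continuous_arcsin.continuousOn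
      (fun u hu => hasDerivAt_arcsin (by linarith [hu.1]) hu.2.ne)
      (fun u _ => by positivity)).mono_set Ioo_subset_Ioc_self
  refine harcsin.mono' (by fun_prop : Measurable _).aestronglyMeasurable
    ((ae_restrict_iff' measurableSet_Ioo).2 (ae_of_all _ fun u hu => ?_))
  have hu2 : 0 < 1 - u ^ 2 := by nlinarith [hu.1, hu.2]
  rw [norm_of_nonneg (by positivity)]
  gcongr
  nlinarith [sq_nonneg u]

theorem integral_pow_div_sqrt_one_sub_mul_sq {c : ℝ} (l : ℕ) (hc : c ≤ 1) :
    ∫ u in (0 : ℝ)..1,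
        u ^ l / √(1 - c * u ^ 2) * (1 - ((l : ℝ) + 2) / ((l : ℝ) + 1) * c * u ^ 2) =
      √(1 - c) / ((l : ℝ) + 1) := by
  have hint : IntervalIntegrable
      (fun u : ℝ => u ^ l / √(1 - c * u ^ 2) * (1 - ((l : ℝ) + 2) / ((l : ℝ) + 1) * c * u ^ 2))
      volume 0 1 := by
    rw [intervalIntegrable_iff_integrableOn_Ioo_of_le zero_le_one]
    have := (integrableOn_one_div_sqrt_one_sub_mul_sq hc).continuousOn_mul_of_subset
      (g := fun u : ℝ => u ^ l * (1 - ((l : ℝ) + 2) / ((l : ℝ) + 1) * c * u ^ 2))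
      (by fun_prop) isCompact_Icc measurableSet_Ioo Ioo_subset_Icc_self
    refine this.congr_fun (fun u _ => ?_) measurableSet_Ioo
    ring
  rw [integral_eq_sub_of_hasDerivAt_of_le zero_le_one (by fun_prop)
    (fun u hu => hasDerivAt_pow_succ_mul_sqrt_one_sub_mul_sq l ?_) hint]
  · simp
  · nlinarith [hu.1, hu.2, mul_le_mul_of_nonneg_right hc (sq_nonneg u)]

theorem integral_positive_vanishing_antitone_general (l : ℕ) :
    (∀ x : ℝ, x ∈ Set.Ioo (0 : ℝ) 1 →
        0 < ∫ u in (0 : ℝ)..1,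
          u ^ l / Real.sqrt (1 - x ^ 2 * u ^ 2) *
            (1 - (((l : ℝ) + 2) / ((l : ℝ) + 1)) * x ^ 2 * u ^ 2)) ∧
    (∫ u in (0 : ℝ)..1,
        u ^ l / Real.sqrt (1 - u ^ 2) *
          (1 - (((l : ℝ) + 2) / ((l : ℝ) + 1)) * u ^ 2)) = 0 ∧
    StrictAntiOn (fun x : ℝ =>
        ∫ u in (0 : ℝ)..1,
          u ^ l / Real.sqrt (1 - x ^ 2 * u ^ 2) *
            (1 - (((l : ℝ) + 2) / ((l : ℝ) + 1)) * x ^ 2 * u ^ 2))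
      (Set.Ioo (0 : ℝ) 1) := by
  have hclosed : ∀ x ∈ Ioo (0 : ℝ) 1, ∫ u in (0 : ℝ)..1,
      u ^ l / √(1 - x ^ 2 * u ^ 2) * (1 - ((l : ℝ) + 2) / ((l : ℝ) + 1) * x ^ 2 * u ^ 2) =
        √(1 - x ^ 2) / ((l : ℝ) + 1) := fun x hx =>
    integral_pow_div_sqrt_one_sub_mul_sq l (by nlinarith [hx.1, hx.2])
  refine ⟨fun x hx => ?_, by simpa using integral_pow_div_sqrt_one_sub_mul_sq l le_rfl,
    fun x hx y hy hxy => ?_⟩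
  · have hx2 : 0 < 1 - x ^ 2 := by nlinarith [hx.1, hx.2]
    rw [hclosed x hx]
    positivity
  · simp only [hclosed x hx, hclosed y hy]
    have hy2 : 0 ≤ 1 - y ^ 2 := by nlinarith [hy.1, hy.2]
    gcongr
    exact hx.1.le

/-- For `ℓ` even, the integral `I(x) = ∫_0^1 (u^ℓ/√(1-x²u²))(1 - ((ℓ+2)/(ℓ+1))x²u²) du`
is strictly positive on `(0,1)`, vanishes at `x = 1`, and is strictly decreasing
on `(0,1)`. -/
theorem integral_positive_vanishing_antitone (l : ℕ) (hl : Even l) :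
    (∀ x : ℝ, x ∈ Set.Ioo (0 : ℝ) 1 →
        0 < ∫ u in (0 : ℝ)..1,
          u ^ l / Real.sqrt (1 - x ^ 2 * u ^ 2) *
            (1 - (((l : ℝ) + 2) / ((l : ℝ) + 1)) * x ^ 2 * u ^ 2)) ∧
    (∫ u in (0 : ℝ)..1,
        u ^ l / Real.sqrt (1 - u ^ 2) *
          (1 - (((l : ℝ) + 2) / ((l : ℝ) + 1)) * u ^ 2)) = 0 ∧
    StrictAntiOn (fun x : ℝ =>
        ∫ u in (0 : ℝ)..1,
          u ^ l / Real.sqrt (1 - x ^ 2 * u ^ 2) *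
            (1 - (((l : ℝ) + 2) / ((l : ℝ) + 1)) * x ^ 2 * u ^ 2))
      (Set.Ioo (0 : ℝ) 1) :=
  integral_positive_vanishing_antitone_general l
end

section
/- For every real M > 0 and every integer N ≥ 2, the quantity γ_c = (2(M+1)/π)·arcsin(1/(M+1)) − (2√(M(M+2)))/(π(N−1)(M+1)) satisfies 0 < γ_c < 1; moreover, for fixed N ≥ 2, the infimum of γ_c over M > 0 is (2/π)·(N−2)/(N−1) and the supremum is 1. -/
/-!
In the variable `t = 1 / (M + 1) ∈ (0, 1)` the critical coupling reads
`γ_c = (2/π) · arcsin t / t - (2 / (π (N - 1))) · √(1 - t²)`.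
Since `1 < arcsin t / t ≤ π/2` and `0 < √(1 - t²) < 1`, it lies strictly between
`2/π - 2/(π (N - 1)) = (2/π)(N - 2)/(N - 1)` and `1`. Both bounds are approached: as `t → 0⁺`
because `arcsin' 0 = 1`, and as `t → 1⁻` by continuity, `arcsin 1 = π/2`.
-/

open Real Set Filter Topology

theorem csInf_image_eq_of_tendsto {α β : Type*} [ConditionallyCompleteLattice β]
    [TopologicalSpace β] [ClosedIciTopology β] {f : α → β} {s : Set α} {l : Filter α} [l.NeBot]
    {b : β} (hs : s ∈ l) (hb : ∀ x ∈ s, b ≤ f x) (hf : Tendsto f l (𝓝 b)) :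
    sInf (f '' s) = b :=
  IsGLB.csInf_eq ⟨forall_mem_image.2 hb, fun _ hc ↦
    ge_of_tendsto hf (eventually_of_mem hs fun _ hx ↦ hc (mem_image_of_mem f hx))⟩
    ((l.nonempty_of_mem hs).image f)

theorem csSup_image_eq_of_tendsto {α β : Type*} [ConditionallyCompleteLattice β]
    [TopologicalSpace β] [ClosedIicTopology β] {f : α → β} {s : Set α} {l : Filter α} [l.NeBot]
    {b : β} (hs : s ∈ l) (hb : ∀ x ∈ s, f x ≤ b) (hf : Tendsto f l (𝓝 b)) :
    sSup (f '' s) = b :=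
  IsLUB.csSup_eq ⟨forall_mem_image.2 hb, fun _ hc ↦
    le_of_tendsto hf (eventually_of_mem hs fun _ hx ↦ hc (mem_image_of_mem f hx))⟩
    ((l.nonempty_of_mem hs).image f)

namespace Real

theorem self_lt_arcsin {x : ℝ} (h₀ : 0 < x) (h₁ : x ≤ 1) : x < arcsin x := by
  simpa [sin_arcsin (by linarith) h₁] using sin_lt (arcsin_pos.2 h₀)

/-- Jordan's inequality `2x/π ≤ sin x` on `[0, π/2]`, read through `arcsin`. -/
theorem arcsin_le_pi_div_two_mul {x : ℝ} (h₀ : 0 ≤ x) (h₁ : x ≤ 1) : arcsin x ≤ π / 2 * x := by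
  have hx : π / 2 * x ≤ π / 2 := mul_le_of_le_one_right (by positivity) h₁
  have hsin : x ≤ sin (π / 2 * x) := by
    simpa [field] using mul_le_sin (by positivity) hx
  calc arcsin x ≤ arcsin (sin (π / 2 * x)) := monotone_arcsin hsin
    _ = π / 2 * x := arcsin_sin (by linarith [pi_pos, mul_nonneg pi_pos.le h₀]) hx

theorem tendsto_arcsin_div_self : Tendsto (fun x ↦ arcsin x / x) (𝓝[≠] 0) (𝓝 1) := by
  have h := hasDerivAt_iff_tendsto_slope.1 (hasDerivAt_arcsin (x := 0) (by norm_num) (by norm_num))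
  convert h using 1
  · ext x
    simp [slope_def_field]
  · simp

end Real

noncomputable def critCoupling (n t : ℝ) : ℝ :=
  2 / π * (arcsin t / t) - 2 / (π * (n - 1)) * √(1 - t ^ 2)

theorem critCoupling_one_div_add_one (n : ℝ) {M : ℝ} (hM : -1 < M) :
    critCoupling n (1 / (M + 1)) =
      2 * (M + 1) / π * arcsin (1 / (M + 1)) - 2 * √(M * (M + 2)) / (π * (n - 1) * (M + 1)) := by
  have hM₁ : 0 < M + 1 := by linarith
  have hsqrt : √(1 - (1 / (M + 1)) ^ 2) = √(M * (M + 2)) / (M + 1) := by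
    rw [show 1 - (1 / (M + 1)) ^ 2 = M * (M + 2) / (M + 1) ^ 2 by field_simp; ring,
      sqrt_div' _ (by positivity), sqrt_sq hM₁.le]
  rw [critCoupling, hsqrt]
  congr 1
  · field_simp
  · rw [div_mul_div_comm]

theorem image_one_div_add_one_Ioi_zero : (fun M : ℝ ↦ 1 / (M + 1)) '' Ioi 0 = Ioo 0 1 := by
  ext t
  constructor
  · rintro ⟨M, hM : 0 < M, rfl⟩
    exact ⟨by positivity, (div_lt_one (by linarith)).2 (by linarith)⟩
  · rintro ⟨ht₀, ht₁⟩
    refine ⟨1 / t - 1, ?_, by simp⟩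
    simpa using one_lt_one_div ht₀ ht₁

section

variable {n t : ℝ}

theorem lt_critCoupling (hn : 1 < n) (ht : t ∈ Ioo 0 1) :
    2 / π * ((n - 2) / (n - 1)) < critCoupling n t := by
  obtain ⟨ht₀, ht₁⟩ := ht
  have hn₁ : 0 < n - 1 := sub_pos.2 hn
  have harcsin : 1 < arcsin t / t := (one_lt_div ht₀).2 (self_lt_arcsin ht₀ ht₁.le)
  have hsqrt : √(1 - t ^ 2) < 1 := (sqrt_lt' one_pos).2 (by nlinarith)
  have hgap : critCoupling n t - 2 / π * ((n - 2) / (n - 1)) =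
      2 / π * (arcsin t / t - 1) + 2 / (π * (n - 1)) * (1 - √(1 - t ^ 2)) := by
    rw [critCoupling]
    field_simp
    ring
  linarith [mul_pos (div_pos two_pos pi_pos) (sub_pos.2 harcsin),
    mul_pos (div_pos two_pos (mul_pos pi_pos hn₁)) (sub_pos.2 hsqrt)]

theorem critCoupling_lt_one (hn : 1 < n) (ht : t ∈ Ioo 0 1) : critCoupling n t < 1 := by
  obtain ⟨ht₀, ht₁⟩ := ht
  have hn₁ : 0 < n - 1 := sub_pos.2 hn
  have harcsin : arcsin t / t ≤ π / 2 :=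
    (div_le_iff₀ ht₀).2 (arcsin_le_pi_div_two_mul ht₀.le ht₁.le)
  have hsqrt : 0 < √(1 - t ^ 2) := sqrt_pos.2 (by nlinarith)
  have hgap : 1 - critCoupling n t =
      2 / π * (π / 2 - arcsin t / t) + 2 / (π * (n - 1)) * √(1 - t ^ 2) := by
    rw [critCoupling]
    field_simp
    ring
  linarith [mul_nonneg (div_pos two_pos pi_pos).le (sub_nonneg.2 harcsin),
    mul_pos (div_pos two_pos (mul_pos pi_pos hn₁)) hsqrt]

theorem tendsto_critCoupling_nhdsGT_zero (hn : n ≠ 1) :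
    Tendsto (critCoupling n) (𝓝[>] 0) (𝓝 (2 / π * ((n - 2) / (n - 1)))) := by
  have hsqrt : Tendsto (fun t : ℝ ↦ √(1 - t ^ 2)) (𝓝[>] 0) (𝓝 1) := by
    have : Continuous (fun t : ℝ ↦ √(1 - t ^ 2)) := by fun_prop
    simpa using (this.tendsto 0).mono_left nhdsWithin_le_nhds
  have hlim : 2 / π * ((n - 2) / (n - 1)) = 2 / π * 1 - 2 / (π * (n - 1)) * 1 := by
    have : n - 1 ≠ 0 := sub_ne_zero.2 hn
    field_simp
    ring
  rw [hlim]
  exact ((tendsto_arcsin_div_self.mono_left (nhdsGT_le_nhdsNE 0)).const_mul _).sub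
    (hsqrt.const_mul _)

theorem tendsto_critCoupling_nhdsLT_one (n : ℝ) : Tendsto (critCoupling n) (𝓝[<] 1) (𝓝 1) := by
  have : ContinuousAt (critCoupling n) 1 := by
    unfold critCoupling
    fun_prop (disch := norm_num)
  have h1 : critCoupling n 1 = 1 := by simp [critCoupling]
  simpa [h1] using this.tendsto.mono_left nhdsWithin_le_nhds

end

/-- Properties of the critical coupling
`γ_c(M) = (2(M+1)/π) arcsin(1/(M+1)) - 2√(M(M+2))/(π(N-1)(M+1))`:
`0 < γ_c < 1` for every `M > 0`, and over `M > 0` its infimum is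
`(2/π)(N-2)/(N-1)` and its supremum is `1`. -/
theorem gamma_c_bounds (N : ℕ) (hN : 2 ≤ N) (γc : ℝ → ℝ)
    (hγc : ∀ M : ℝ, γc M =
        2 * (M + 1) / π * Real.arcsin (1 / (M + 1)) -
          2 * Real.sqrt (M * (M + 2)) / (π * ((N : ℝ) - 1) * (M + 1))) :
    (∀ M : ℝ, 0 < M → 0 < γc M ∧ γc M < 1) ∧
    sInf (γc '' Set.Ioi (0 : ℝ)) = 2 / π * (((N : ℝ) - 2) / ((N : ℝ) - 1)) ∧
    sSup (γc '' Set.Ioi (0 : ℝ)) = 1 := by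
  have hN' : (2 : ℝ) ≤ N := mod_cast hN
  have hN₁ : (1 : ℝ) < N := by linarith
  have himage : γc '' Ioi 0 = critCoupling N '' Ioo 0 1 := by
    rw [← image_one_div_add_one_Ioi_zero, image_image]
    refine image_congr fun M hM ↦ ?_
    rw [hγc, critCoupling_one_div_add_one _ (by linarith [mem_Ioi.1 hM])]
  have hinf_nonneg : 0 ≤ 2 / π * (((N : ℝ) - 2) / ((N : ℝ) - 1)) :=
    mul_nonneg (div_pos two_pos pi_pos).le (div_nonneg (by linarith) (by linarith))
  refine ⟨fun M hM ↦ ?_, ?_, ?_⟩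
  · obtain ⟨t, ht, hγ⟩ : γc M ∈ critCoupling N '' Ioo 0 1 := himage ▸ mem_image_of_mem γc hM
    rw [← hγ]
    exact ⟨hinf_nonneg.trans_lt (lt_critCoupling hN₁ ht), critCoupling_lt_one hN₁ ht⟩
  · rw [himage]
    exact csInf_image_eq_of_tendsto (Ioo_mem_nhdsGT one_pos)
      (fun t ht ↦ (lt_critCoupling hN₁ ht).le) (tendsto_critCoupling_nhdsGT_zero hN₁.ne')
  · rw [himage]
    exact csSup_image_eq_of_tendsto (Ioo_mem_nhdsLT one_pos)
      (fun t ht ↦ (critCoupling_lt_one hN₁ ht).le) (tendsto_critCoupling_nhdsLT_one N)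
end

section
/- For every real p, the function S(p) = (2/sinh(πp/2)) ∫_0^{π/2} sin(u)·sinh(pu) du (interpreted at p = 0 as its limit) is even, decreasing in |p|, attains its maximum value 4/π at p = 0, and satisfies 0 < S(p) ≤ 4/π for all p. -/
/-!
Writing `S(p) = 2 ∫₀^{π/2} sin u · (sinh(pu) / sinh(πp/2)) du`, everything reduces to two facts
about the kernel for `0 ≤ u ≤ c`: `p ↦ sinh(pu) / sinh(pc)` is antitone on `(0, ∞)`, because
`x ↦ x coth x` is monotone, and it is bounded by `u / c`, because `sinh` is convex on `[0, ∞)`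
(so `sinh x / x` is monotone). With `∫₀^{π/2} u sin u du = 1` the bound is exactly `S(0) = 4/π`.
-/

open Real Set MeasureTheory

lemma convexOn_sinh_Ici : ConvexOn ℝ (Ici 0) sinh := by
  refine MonotoneOn.convexOn_of_deriv (convex_Ici 0) continuous_sinh.continuousOn
    differentiable_sinh.differentiableOn ?_
  rw [Real.deriv_sinh]
  exact cosh_strictMonoOn.monotoneOn.mono interior_subset

lemma mul_sinh_le_mul_sinh {x y : ℝ} (hx : 0 ≤ x) (hxy : x ≤ y) : y * sinh x ≤ x * sinh y := by
  rcases hx.eq_or_lt with rfl | hx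
  · simp
  have hy := hx.trans_le hxy
  have h := convexOn_sinh_Ici.secant_mono self_mem_Ici hx.le hy.le hx.ne' hy.ne' hxy
  simp only [sinh_zero, sub_zero] at h
  rw [div_le_div_iff₀ hx hy] at h
  linarith

/-- Monotonicity of `x ↦ x coth x`, from `mul_sinh_le_mul_sinh` applied to `b - a ≤ a + b`. -/
lemma mul_cosh_mul_sinh_le {a b : ℝ} (ha : 0 ≤ a) (hab : a ≤ b) :
    a * cosh a * sinh b ≤ b * cosh b * sinh a := by
  have h := mul_sinh_le_mul_sinh (sub_nonneg.2 hab) (by linarith : b - a ≤ a + b)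
  rw [sinh_sub, sinh_add] at h
  linarith

lemma antitoneOn_sinh_mul_div_sinh_mul {u c : ℝ} (hu : 0 ≤ u) (huc : u ≤ c) (hc : 0 < c) :
    AntitoneOn (fun p => sinh (p * u) / sinh (p * c)) (Ioi 0) := by
  have hsinh : ∀ p ∈ Ioi (0 : ℝ), sinh (p * c) ≠ 0 := fun p hp =>
    (sinh_pos_iff.2 (mul_pos hp hc)).ne'
  refine antitoneOn_of_hasDerivWithinAt_nonpos (convex_Ioi 0)
    (f' := fun p => (cosh (p * u) * u * sinh (p * c) - sinh (p * u) * (cosh (p * c) * c)) /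
      sinh (p * c) ^ 2)
    (ContinuousOn.div (by fun_prop) (by fun_prop) hsinh) (fun p hp => ?_) (fun p hp => ?_)
  · rw [interior_Ioi] at hp ⊢
    exact ((hasDerivAt_mul_const u).sinh.div (hasDerivAt_mul_const c).sinh
      (hsinh p hp)).hasDerivWithinAt
  · rw [interior_Ioi] at hp
    have hp : 0 < p := hp
    have key := mul_cosh_mul_sinh_le (mul_nonneg hp.le hu) (mul_le_mul_of_nonneg_left huc hp.le)
    have hnum : p * (cosh (p * u) * u * sinh (p * c) - sinh (p * u) * (cosh (p * c) * c)) ≤ 0 := by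
      linarith
    exact div_nonpos_of_nonpos_of_nonneg (nonpos_of_mul_nonpos_right hnum hp) (sq_nonneg _)

lemma sinh_mul_div_sinh_mul_le {p u c : ℝ} (hp : 0 < p) (hu : 0 ≤ u) (huc : u ≤ c) (hc : 0 < c) :
    sinh (p * u) / sinh (p * c) ≤ u / c := by
  rw [div_le_div_iff₀ (sinh_pos_iff.2 (mul_pos hp hc)) hc]
  have h := mul_sinh_le_mul_sinh (mul_nonneg hp.le hu) (mul_le_mul_of_nonneg_left huc hp.le)
  refine le_of_mul_le_mul_left ?_ hp
  linarith

lemma Function.Even.le_of_abs_le_abs {α β : Type*} [AddCommGroup α] [LinearOrder α]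
    [IsOrderedAddMonoid α] [Preorder β] {f : α → β} (hf : Function.Even f)
    (hanti : AntitoneOn f (Ici 0)) {x y : α} (h : |x| ≤ |y|) : f y ≤ f x := by
  have habs : ∀ z, f |z| = f z := fun z => by
    rcases abs_choice z with hz | hz <;> rw [hz]
    exact hf z
  rw [← habs x, ← habs y]
  exact hanti (abs_nonneg x) (abs_nonneg y) h

lemma AntitoneOn.Ici_of_Ioi {α β : Type*} [LinearOrder α] [Preorder β] {f : α → β} {a : α}
    (hf : AntitoneOn f (Ioi a)) (ha : ∀ x ∈ Ioi a, f x ≤ f a) : AntitoneOn f (Ici a) := by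
  intro x hx y hy hxy
  rcases (mem_Ici.1 hx).eq_or_lt with rfl | hx
  · rcases (mem_Ici.1 hy).eq_or_lt with rfl | hy
    exacts [le_rfl, ha y hy]
  · exact hf hx (hx.trans_le hxy) hxy

lemma integral_sin_mul_self : ∫ u in (0)..(π / 2), sin u * u = 1 := by
  have h : ∀ u ∈ uIcc 0 (π / 2), HasDerivAt (fun u => sin u - u * cos u) (sin u * u) u := by
    intro u _
    exact ((hasDerivAt_sin u).sub ((hasDerivAt_id' u).mul (hasDerivAt_cos u))).congr_deriv
      (by ring)
  rw [intervalIntegral.integral_eq_sub_of_hasDerivAt h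
    ((continuous_sin.mul continuous_id).intervalIntegrable _ _)]
  simp

/-- At `p = 0` this is `0` (division by `sinh 0`), not the limit `(∫₀ᶜ w u · u du) / c`. -/
noncomputable def sinhRatioIntegral (w : ℝ → ℝ) (c p : ℝ) : ℝ :=
  ∫ u in (0)..c, w u * (sinh (p * u) / sinh (p * c))

section sinhRatioIntegral

variable {w : ℝ → ℝ} {c : ℝ}

lemma sinhRatioIntegral_neg (p : ℝ) : sinhRatioIntegral w c (-p) = sinhRatioIntegral w c p := by
  simp only [sinhRatioIntegral, neg_mul, sinh_neg, neg_div_neg_eq]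

lemma sinhRatioIntegral_antitoneOn (hc : 0 < c) (hw : IntervalIntegrable w volume 0 c)
    (hw0 : ∀ u ∈ Icc 0 c, 0 ≤ w u) : AntitoneOn (sinhRatioIntegral w c) (Ioi 0) := by
  intro p hp q hq hpq
  refine intervalIntegral.integral_mono_on hc.le (hw.mul_continuousOn (by fun_prop))
    (hw.mul_continuousOn (by fun_prop)) fun u hu => ?_
  exact mul_le_mul_of_nonneg_left
    (antitoneOn_sinh_mul_div_sinh_mul hu.1 hu.2 hc hp hq hpq) (hw0 u hu)

lemma sinhRatioIntegral_le (hc : 0 < c) (hw : IntervalIntegrable w volume 0 c)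
    (hw0 : ∀ u ∈ Icc 0 c, 0 ≤ w u) {p : ℝ} (hp : 0 < p) :
    sinhRatioIntegral w c p ≤ (∫ u in (0)..c, w u * u) / c := by
  rw [← intervalIntegral.integral_div]
  refine intervalIntegral.integral_mono_on hc.le (hw.mul_continuousOn (by fun_prop))
    ((hw.mul_continuousOn continuousOn_id).div_const c) fun u hu => ?_
  rw [mul_div_assoc]
  exact mul_le_mul_of_nonneg_left (sinh_mul_div_sinh_mul_le hp hu.1 hu.2 hc) (hw0 u hu)

lemma sinhRatioIntegral_pos (hc : 0 < c) (hw : IntervalIntegrable w volume 0 c)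
    (hw0 : ∀ u ∈ Ioo 0 c, 0 < w u) {p : ℝ} (hp0 : p ≠ 0) : 0 < sinhRatioIntegral w c p := by
  wlog hp : 0 < p generalizing p with H
  · rw [← sinhRatioIntegral_neg]
    exact H (neg_ne_zero.2 hp0) (neg_pos.2 ((not_lt.1 hp).lt_of_ne hp0))
  refine intervalIntegral.intervalIntegral_pos_of_pos_on (hw.mul_continuousOn (by fun_prop))
    (fun u hu => mul_pos (hw0 u hu) (div_pos ?_ ?_)) hc
  · exact sinh_pos_iff.2 (mul_pos hp hu.1)
  · exact sinh_pos_iff.2 (mul_pos hp hc)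

end sinhRatioIntegral

/-- The function `S(p) = (2/sinh(πp/2)) ∫_0^{π/2} sin(u) sinh(pu) du` (with value
`4/π` at `p = 0`) is even, decreasing in `|p|`, attains its maximum `4/π` at `p = 0`,
and satisfies `0 < S(p) ≤ 4/π`. -/
theorem S_reg_one_properties (S : ℝ → ℝ)
    (hS0 : S 0 = 4 / π)
    (hS : ∀ p : ℝ, p ≠ 0 → S p =
        2 / Real.sinh (π * p / 2) *
          ∫ u in (0 : ℝ)..(π / 2), Real.sin u * Real.sinh (p * u)) :
    (∀ p : ℝ, S (-p) = S p) ∧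
    (∀ p q : ℝ, |p| ≤ |q| → S q ≤ S p) ∧
    (∀ p : ℝ, 0 < S p ∧ S p ≤ 4 / π) := by
  have hc : 0 < π / 2 := by positivity
  have hsin : IntervalIntegrable sin volume 0 (π / 2) := continuous_sin.intervalIntegrable _ _
  have hsin_nonneg : ∀ u ∈ Icc 0 (π / 2), 0 ≤ sin u := fun u hu =>
    sin_nonneg_of_nonneg_of_le_pi hu.1 (by linarith [hu.2])
  have hSp : ∀ p ≠ 0, S p = 2 * sinhRatioIntegral sin (π / 2) p := fun p hp => by
    rw [hS p hp, sinhRatioIntegral]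
    simp_rw [← mul_div_assoc]
    rw [intervalIntegral.integral_div, mul_comm p π]
    ring
  have hS0' : S 0 = 2 * ((∫ u in (0)..(π / 2), sin u * u) / (π / 2)) := by
    rw [hS0, integral_sin_mul_self]
    ring
  have heven : Function.Even S := fun p => by
    rcases eq_or_ne p 0 with rfl | hp
    · rw [neg_zero]
    · rw [hSp p hp, hSp (-p) (neg_ne_zero.2 hp), sinhRatioIntegral_neg]
  have hanti : AntitoneOn S (Ici 0) := by
    refine AntitoneOn.Ici_of_Ioi (fun p hp q hq hpq => ?_) fun q hq => ?_
    · rw [hSp p (ne_of_gt hp), hSp q (ne_of_gt hq)]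
      gcongr
      exact sinhRatioIntegral_antitoneOn hc hsin hsin_nonneg hp hq hpq
    · rw [hSp q (ne_of_gt hq), hS0']
      gcongr
      exact sinhRatioIntegral_le hc hsin hsin_nonneg hq
  refine ⟨heven, fun p q h => heven.le_of_abs_le_abs hanti h, fun p => ⟨?_, ?_⟩⟩
  · rcases eq_or_ne p 0 with rfl | hp
    · rw [hS0]
      positivity
    · rw [hSp p hp]
      exact mul_pos two_pos (sinhRatioIntegral_pos hc hsin
        (fun u hu => sin_pos_of_pos_of_lt_pi hu.1 (by linarith [hu.2])) hp)
  · simpa [hS0] using heven.le_of_abs_le_abs hanti (x := 0) (y := p) (by simp)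
end
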